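/- Let I be an m-primary ideal satisfying Condition (C) and let J be an m-primary ideal of R containing an element b with J² = bJ and J = (b) :_R J. If I ⊆ J, then J = (b) + I. -/

import Mathlib

set_option synthInstance.maxHeartbeats 1000000
set_option maxHeartbeats 2000000
set_option linter.unnecessarySimpa false

open IsLocalRing Pointwise

section Defs
variable (R : Type*) [CommRing R]

/-- minimal number of generators of a submodule -/
noncomputable def mu {M : Type*} [AddCommGroup M] [Module R M] (N : Submodule R M) : ℕ :=
  sInf {n | ∃ s : Finset M, s.card = n ∧ Submodule.span R (↑s : Set M) = N}

/-- length of a module, as the Krull dimension of its lattice of submodules -/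
noncomputable def rlength (M : Type*) [AddCommGroup M] [Module R M] : WithBot ℕ∞ :=
  Order.krullDim (Submodule R M)

variable (K : Type*) [CommRing K] [Algebra R K]

/-- the image of an ideal in the total ring of fractions `K` -/
noncomputable def toK (I : Ideal R) : Submodule R K :=
  Submodule.map (Algebra.linearMap R K) I

/-- colon of submodules of the total quotient ring: `X : Y = {z | zY ⊆ X}` -/
def qcolon (X Y : Submodule R K) : Submodule R K where
  carrier := {z | ∀ y ∈ Y, z * y ∈ X}
  add_mem' := by
    intro a b ha hb y hy
    simpa [add_mul] using X.add_mem (ha y hy) (hb y hy)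
  zero_mem' := by
    intro y hy; simpa using X.zero_mem
  smul_mem' := by
    intro c a ha y hy
    simpa [smul_mul_assoc] using X.smul_mem c (ha y hy)

/-- `I : I`, viewed as a subalgebra (a birational extension of `R`) of the total
ring of fractions `K`. -/
noncomputable def endAlg (I : Ideal R) : Subalgebra R K where
  carrier := {z | ∀ y ∈ toK R K I, z * y ∈ toK R K I}
  mul_mem' := by
    intro a b ha hb y hy
    rw [mul_assoc]; exact ha _ (hb y hy)
  add_mem' := by
    intro a b ha hb y hy
    simpa [add_mul] using (toK R K I).add_mem (ha y hy) (hb y hy)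
  one_mem' := by intro y hy; simpa using hy
  zero_mem' := by intro y hy; simpa using (toK R K I).zero_mem
  algebraMap_mem' := by
    intro r y hy
    simpa [Algebra.smul_def] using (toK R K I).smul_mem r hy

/-- the socle `{x | m x = 0}` of a module over a local ring (`(⊥).jacobson` is
the maximal ideal of a local ring) -/
def socle (M : Type*) [AddCommGroup M] [Module R M] : Submodule R M where
  carrier := {x | ∀ c ∈ (⊥ : Ideal R).jacobson, c • x = 0}
  add_mem' := by
    intro a b ha hb c hc; rw [smul_add, ha c hc, hb c hc, add_zero]
  zero_mem' := by intro c hc; simp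
  smul_mem' := by
    intro r x hx c hc; rw [smul_comm, hx c hc, smul_zero]

/-- `R` has multiplicity `e`: the Hilbert function of the maximal ideal has
eventual first difference `e`.  (This is the multiplicity of a one-dimensional
Cohen-Macaulay local ring.) -/
noncomputable def HasMult (e : ℕ) : Prop :=
  ∀ᶠ n in Filter.atTop,
    rlength R (R ⧸ ((⊥ : Ideal R).jacobson ^ (n + 1))) =
      rlength R (R ⧸ ((⊥ : Ideal R).jacobson ^ n)) + (e : WithBot ℕ∞)

/-- `R` has Cohen-Macaulay type `r`: for every parameter (a nonzerodivisor in
the maximal ideal), the socle of `R/(a)` has length `r`. -/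
noncomputable def HasCMType (r : ℕ) : Prop :=
  ∀ a : R, a ∈ (⊥ : Ideal R).jacobson → a ∈ nonZeroDivisors R →
    rlength (R ⧸ Ideal.span {a}) (socle (R ⧸ Ideal.span {a}) (R ⧸ Ideal.span {a}))
      = (r : WithBot ℕ∞)

/-- an Artinian local ring is Gorenstein iff its socle is simple -/
noncomputable def IsArtinianGorensteinLocal : Prop :=
  IsArtinianRing R ∧ IsLocalRing R ∧ rlength R (socle R R) = (1 : WithBot ℕ∞)

/-- a one-dimensional Cohen-Macaulay (Noetherian) local ring: local Noetherian
of Krull dimension one with positive depth -/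
class IsOneDimCMLocal : Prop where
  noeth : IsNoetherianRing R
  local_ : IsLocalRing R
  dim_one : ringKrullDim R = 1
  depth_pos : ∃ a : R, a ∈ (⊥ : Ideal R).jacobson ∧ a ∈ nonZeroDivisors R

/-- Ulrich ideal: an `m`-primary ideal with a principal reduction `Q ⊊ I`,
`I² = QI`, and `I/I²` free over `R/I`. -/
def IsUlrich (I : Ideal R) : Prop :=
  I.radical = (⊥ : Ideal R).jacobson ∧ I ≠ ⊤ ∧
  ∃ a ∈ I, Ideal.span {a} ≠ I ∧ I ^ 2 = Ideal.span {a} * I ∧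
    Module.Free (R ⧸ I) I.Cotangent

/-- Condition (C) for an `m`-primary ideal `I`, with the number `t`:
`A/R ≅ (R/I)^t` with `t > 0` and `A = R : I`, where `A = I : I`. -/
def ConditionC (I : Ideal R) (t : ℕ) : Prop :=
  I.radical = (⊥ : Ideal R).jacobson ∧ I ≠ ⊤ ∧ 0 < t ∧
  Nonempty (((qcolon R K (toK R K I) (toK R K I)) ⧸
      (Submodule.comap (qcolon R K (toK R K I) (toK R K I)).subtype (toK R K (⊤ : Ideal R))))
    ≃ₗ[R] (Fin t → R ⧸ I)) ∧
  qcolon R K (toK R K I) (toK R K I) = qcolon R K (toK R K (⊤ : Ideal R)) (toK R K I)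

end Defs

/-! For `x ∈ J` we have `xI ⊆ J² = bJ ⊆ bR`, so `z = x / b` lies in `R : I = A`, and `b` kills the
class of `z` in `A/R ≅ (R/I)^t`. The `b`-torsion of `(R/I)^t` is `(I : b)(R/I)^t`, hence
`z ∈ (I : b)A + R` and `x = bz ∈ b(I : b)A + bR ⊆ IA + bR = I + bR`, as `A = I : I`.
Dividing by `b` is legitimate because `J` contains a nonzerodivisor `a`, and `a² ∈ bJ`. -/

section

open nonZeroDivisors

variable {R : Type*} [CommRing R]

theorem mem_nonZeroDivisors_of_sq_eq_span_singleton_mul {J : Ideal R} {a b : R}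
    (haJ : a ∈ J) (ha : a ∈ R⁰) (hJ : J ^ 2 = Ideal.span {b} * J) : b ∈ R⁰ := by
  have haa : a * a ∈ Ideal.span {b} * J := by
    rw [← hJ, pow_two]
    exact Ideal.mul_mem_mul haJ haJ
  obtain ⟨d, hd⟩ := Ideal.mem_span_singleton'.mp (Ideal.mul_le_left haa)
  refine mem_nonZeroDivisors_iff_right.mpr fun c hc => ?_
  refine mem_nonZeroDivisors_iff_right.mp (mul_mem ha ha) c ?_
  rw [← hd, mul_left_comm, hc, mul_zero]

theorem mem_colon_smul_top_of_smul_eq_zero {M ι : Type*} [AddCommGroup M] [Module R M]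
    [Fintype ι] {I : Ideal R} (e : M ≃ₗ[R] (ι → R ⧸ I)) {b : R} {m : M} (hm : b • m = 0) :
    m ∈ I.colon {b} • (⊤ : Submodule R M) := by
  classical
  choose c hc using fun i => Ideal.Quotient.mk_surjective (e m i)
  have hm_eq : m = ∑ i, c i • e.symm (Pi.single i 1) := by
    apply e.injective
    rw [map_sum, ← Finset.univ_sum_single (e m)]
    refine Finset.sum_congr rfl fun i _ => ?_
    rw [map_smul, LinearEquiv.apply_symm_apply, ← Pi.single_smul, ← hc, Algebra.smul_def,
      Ideal.Quotient.algebraMap_eq, mul_one]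
  rw [hm_eq]
  refine Submodule.sum_mem _ fun i _ => Submodule.smul_mem_smul ?_ Submodule.mem_top
  have hbi : b • e m i = 0 := by rw [← Pi.smul_apply, ← map_smul, hm, map_zero, Pi.zero_apply]
  rw [Submodule.mem_colon_singleton, smul_eq_mul, ← Ideal.Quotient.eq_zero_iff_mem, map_mul, hc,
    mul_comm, ← Ideal.Quotient.algebraMap_eq, ← Algebra.smul_def, hbi]

theorem Submodule.Quotient.mk_mem_smul_top_iff {M : Type*} [AddCommGroup M] [Module R M]
    {N : Submodule R M} {Q : Ideal R} {m : M} :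
    (Submodule.Quotient.mk m : M ⧸ N) ∈ Q • (⊤ : Submodule R (M ⧸ N)) ↔
      m ∈ N ⊔ Q • (⊤ : Submodule R M) := by
  rw [← Submodule.comap_map_mkQ, Submodule.mem_comap, Submodule.map_smul'', Submodule.map_top,
    Submodule.range_mkQ, Submodule.mkQ_apply]

variable {K : Type*} [CommRing K] [Algebra R K]

theorem mem_toK {I : Ideal R} {y : K} : y ∈ toK R K I ↔ ∃ i ∈ I, algebraMap R K i = y := by
  simp [toK]

theorem smul_coe_mem_toK_of_mem_colon_smul_top {I : Ideal R} {b : R}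
    {ζ : qcolon R K (toK R K I) (toK R K I)}
    (hζ : ζ ∈ I.colon {b} • (⊤ : Submodule R (qcolon R K (toK R K I) (toK R K I)))) :
    b • (ζ : K) ∈ toK R K I := by
  refine Submodule.smul_induction_on hζ (fun q hq a _ => ?_) fun ζ₁ ζ₂ h₁ h₂ => ?_
  · have hqb : q * b ∈ I := Submodule.mem_colon_singleton.mp hq
    rw [Submodule.coe_smul, smul_smul, Algebra.smul_def, mul_comm, mul_comm b]
    exact a.2 _ (mem_toK.mpr ⟨_, hqb, rfl⟩)
  · rw [Submodule.coe_add, smul_add]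
    exact add_mem h₁ h₂

theorem ConditionC.mem_span_singleton_sup [IsFractionRing R K] {I : Ideal R} {t : ℕ}
    (hC : ConditionC R K I t) {b x : R} (hb : b ∈ R⁰) (hx : ∀ i ∈ I, x * i ∈ Ideal.span {b}) :
    x ∈ Ideal.span {b} ⊔ I := by
  obtain ⟨-, -, -, ⟨e⟩, hA⟩ := hC
  set z := IsLocalization.mk' K x (⟨b, hb⟩ : R⁰)
  have hzA : z ∈ qcolon R K (toK R K I) (toK R K I) := by
    rw [hA]
    intro y hy
    obtain ⟨i, hi, rfl⟩ := mem_toK.mp hy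
    obtain ⟨r, hr⟩ := Ideal.mem_span_singleton'.mp (hx i hi)
    refine mem_toK.mpr ⟨r, trivial, ?_⟩
    rw [mul_comm, IsLocalization.mul_mk'_eq_mk'_of_mul, mul_comm, ← hr]
    exact (IsLocalization.mk'_mul_cancel_right r (⟨b, hb⟩ : R⁰)).symm
  have hxz : algebraMap R K x = b • z := by
    rw [Algebra.smul_def]
    exact (IsLocalization.mk'_spec' K x (⟨b, hb⟩ : R⁰)).symm
  set N := Submodule.comap (qcolon R K (toK R K I) (toK R K I)).subtype (toK R K ⊤)
  have hbz : b • Submodule.Quotient.mk ⟨z, hzA⟩ = (0 : _ ⧸ N) := by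
    rw [← Submodule.Quotient.mk_smul, Submodule.Quotient.mk_eq_zero]
    exact mem_toK.mpr ⟨x, trivial, hxz⟩
  obtain ⟨n, hn, ζ, hζ, hnζ⟩ := Submodule.mem_sup.mp
    (Submodule.Quotient.mk_mem_smul_top_iff.mp (mem_colon_smul_top_of_smul_eq_zero e hbz))
  obtain ⟨r, -, hr⟩ := mem_toK.mp hn
  obtain ⟨w, hw, hwζ⟩ := mem_toK.mp (smul_coe_mem_toK_of_mem_colon_smul_top hζ)
  have hx_eq : x = b * r + w := by
    apply IsFractionRing.injective R K
    have hz : z = n + ζ := congrArg Subtype.val hnζ.symm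
    rw [Submodule.subtype_apply] at hr
    rw [hxz, hz, smul_add, ← hwζ, ← hr, Algebra.smul_def, map_add, map_mul]
  rw [hx_eq]
  exact add_mem (Submodule.mem_sup_left (Ideal.mul_mem_right _ _ (Ideal.mem_span_singleton_self b)))
    (Submodule.mem_sup_right hw)

end

theorem stmt3_general (R : Type*) [CommRing R] [IsOneDimCMLocal R]
    (K : Type*) [CommRing K] [Algebra R K] [IsFractionRing R K]
    (I : Ideal R) (t : ℕ) (hC : ConditionC R K I t)
    (J : Ideal R) (hJm : J.radical = (⊥ : Ideal R).jacobson)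
    (b : R) (hb : b ∈ J) (hred : J ^ 2 = Ideal.span {b} * J)
    (hIJ : I ≤ J) :
    J = Ideal.span {b} ⊔ I := by
  obtain ⟨a, ham, ha⟩ := IsOneDimCMLocal.depth_pos (R := R)
  obtain ⟨k, hak⟩ := Ideal.mem_radical_iff.mp (hJm ▸ ham : a ∈ J.radical)
  have hb_nzd : b ∈ nonZeroDivisors R :=
    mem_nonZeroDivisors_of_sq_eq_span_singleton_mul hak (pow_mem ha k) hred
  refine le_antisymm (fun x hx => hC.mem_span_singleton_sup hb_nzd fun i hi => ?_)
    (sup_le ((Ideal.span_singleton_le_iff_mem J).mpr hb) hIJ)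
  have hxi : x * i ∈ Ideal.span {b} * J := by
    rw [← hred, pow_two]
    exact Ideal.mul_mem_mul hx (hIJ hi)
  exact Ideal.mul_le_left hxi

theorem stmt3 (R : Type*) [CommRing R] [IsOneDimCMLocal R]
    (K : Type*) [CommRing K] [Algebra R K] [IsFractionRing R K]
    (I : Ideal R) (t : ℕ) (hC : ConditionC R K I t)
    (J : Ideal R) (hJm : J.radical = (⊥ : Ideal R).jacobson) (hJtop : J ≠ ⊤)
    (b : R) (hb : b ∈ J) (hred : J ^ 2 = Ideal.span {b} * J)
    (hcol : J = Submodule.colon (Ideal.span {b} : Ideal R) J)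
    (hIJ : I ≤ J) :
    J = Ideal.span {b} ⊔ I :=
  stmt3_general R K I t hC J hJm b hb hred hIJ
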